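/- arXiv:1704.05168 — 2 statements merged into one kernel-verified Lean document; each statement's English description precedes it below -/
import Mathlib

section
/- Let w > 0 be an integer, k < 0 rational, λ real, 0 < q < 1. Define A⁺_λ(q) = ∑_{ℓ=0}^{∞} ∑_{m=0}^{∞} [q^{-(λ - 2w(ℓ+m))²/(4k)} - q^{-(λ + 2w(ℓ+m+1))²/(4k)}] (absolutely convergent double sum). Then A⁺_λ(q) = ∑_{n=0}^{∞} (n+1)[q^{-(λ-2wn)²/(4k)} - q^{-(λ+2w(n+1))²/(4k)}] = Θ'_{λ}(q) + (λ/2w)Θ_{λ}(q) + ∑_{n=0}^{∞} q^{-(λ-2wn)²/(4k)}, where Θ and Θ' are as above. -/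
/-!
Write `f ℓ = q ^ (-(λ - 2wℓ)² / (4k))` for `ℓ ∈ ℤ`; since `k < 0` and `0 < q < 1` this is a
Gaussian in `ℓ`, so `ℓ ↦ |ℓ| f ℓ` is summable over `ℤ`. The subtracted term of `A⁺` is
`f (-(n + 1))` with `n = ℓ + m`, so grouping the double sum along the diagonals `ℓ + m = n`
gives `∑ₙ (n + 1) (f n - f (-(n + 1)))`, absolutely convergent. Splitting
`(n + 1) (f n - f (-(n + 1))) = n f n + (-(n + 1)) f (-(n + 1)) + f n` and summing over `n ≥ 0`
yields `∑_{ℓ ∈ ℤ} ℓ f ℓ + ∑_{n ≥ 0} f n`, and `∑_{ℓ ∈ ℤ} ℓ f ℓ = Θ' + (λ / 2w) Θ`.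
-/

/-- The lattice theta function of `L = 2wℤ`, specialized at `z = 1`. -/
noncomputable def Th (w : ℤ) (k : ℚ) (q μ : ℝ) : ℝ :=
  ∑' ℓ : ℤ, q ^ (-(μ - 2 * (w : ℝ) * (ℓ : ℝ)) ^ 2 / (4 * (k : ℝ)))

/-- The specialized derivative theta function of `L = 2wℤ` at `z = 1`. -/
noncomputable def Th' (w : ℤ) (k : ℚ) (q μ : ℝ) : ℝ :=
  (∑' ℓ : ℤ, (ℓ : ℝ) * q ^ (-(μ - 2 * (w : ℝ) * (ℓ : ℝ)) ^ 2 / (4 * (k : ℝ))))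
    - (μ / (2 * (w : ℝ))) * Th w k q μ

open Finset Real

lemma summable_abs_pow_mul_rpow_neg_sq_div {q c : ℝ} (hq0 : 0 < q) (hq1 : q < 1) (hc : c < 0)
    (a : ℝ) {b : ℝ} (hb : b ≠ 0) (m : ℕ) :
    Summable fun n : ℤ => |(n : ℝ)| ^ m * q ^ (-(a - b * n) ^ 2 / c) := by
  set r := Real.log q / c
  have hr : 0 < r := div_pos_of_neg_of_neg (Real.log_neg hq0 hq1) hc
  -- `(a - b n)² ≥ b² n² - 2 |a| |b| |n|` puts the term under the Jacobi theta bound.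
  refine (summable_pow_mul_jacobiTheta₂_term_bound (r * |a| * |b| / π) (T := r * b ^ 2 / π)
    (by positivity) m).of_nonneg_of_le (fun n => by positivity) fun n => ?_
  rw [Int.cast_abs]
  gcongr
  rw [Real.rpow_def_of_pos hq0, Real.exp_le_exp]
  have hab : a * b * n ≤ |a| * |b| * |(n : ℝ)| := by
    rw [← abs_mul, ← abs_mul]
    exact le_abs_self _
  have hexponent : Real.log q * (-(a - b * n) ^ 2 / c) = -r * (a - b * n) ^ 2 := by
    simp only [r]
    ring
  rw [hexponent]
  field_simp
  nlinarith [sq_nonneg a]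

lemma hasSum_succ_mul_sub_neg_succ {R : Type*} [NormedRing R] [CompleteSpace R] {f : ℤ → R}
    (hf : Summable f) (hℓf : Summable fun ℓ : ℤ => (ℓ : R) * f ℓ) :
    HasSum (fun n : ℕ => ((n : R) + 1) * (f n - f (-(n + 1))))
      ((∑' ℓ : ℤ, (ℓ : R) * f ℓ) + ∑' n : ℕ, f n) := by
  have hnat : HasSum (fun n : ℕ => f n) (∑' n : ℕ, f n) :=
    (hf.comp_injective Nat.cast_injective).hasSum
  convert hℓf.hasSum.nat_add_neg_add_one.add hnat using 2 with n
  simp only [Int.cast_neg, Int.cast_add, Int.cast_natCast, Int.cast_one,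
    neg_mul, mul_sub, add_mul, one_mul]
  abel

lemma hasSum_prod_comp_add {E : Type*} [NormedAddCommGroup E] [CompleteSpace E] {c : ℕ → E}
    (hc : Summable fun n : ℕ => ((n : ℝ) + 1) * ‖c n‖) :
    HasSum (fun p : ℕ × ℕ => c (p.1 + p.2)) (∑' n : ℕ, (n + 1) • c n) := by
  have hfiber (n : ℕ) : HasSum (fun _ : antidiagonal n => c n) ((n + 1) • c n) := by
    simpa using hasSum_fintype (fun _ : antidiagonal n => c n)
  have hnorm : Summable fun s : (Σ n : ℕ, antidiagonal n) => ‖c s.1‖ := by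
    rw [summable_sigma_of_nonneg fun _ => norm_nonneg _]
    refine ⟨fun n => (hasSum_fintype _).summable, hc.congr fun n => ?_⟩
    simp [tsum_fintype]
  have hsum : Summable fun n : ℕ => (n + 1) • c n :=
    hc.of_norm_bounded fun n => by simpa using (norm_nsmul_le : ‖(n + 1) • c n‖ ≤ _)
  rw [← (HasAntidiagonal.sigmaAntidiagonalEquivProd (A := ℕ)).hasSum_iff]
  convert hsum.hasSum.sigma_of_hasSum hfiber hnorm.of_norm using 2 with s
  exact congrArg c (mem_antidiagonal.mp s.2.2)

theorem stmt10 (w : ℤ) (hw : 0 < w) (k : ℚ) (hk : k < 0)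
    (lam q : ℝ) (hq0 : 0 < q) (hq1 : q < 1) :
    Summable (fun p : ℕ × ℕ =>
        q ^ (-(lam - 2 * (w : ℝ) * ((p.1 : ℝ) + (p.2 : ℝ))) ^ 2 / (4 * (k : ℝ)))
          - q ^ (-(lam + 2 * (w : ℝ) * ((p.1 : ℝ) + (p.2 : ℝ) + 1)) ^ 2 / (4 * (k : ℝ)))) ∧
    (∑' ℓ : ℕ, ∑' m : ℕ,
        (q ^ (-(lam - 2 * (w : ℝ) * ((ℓ : ℝ) + (m : ℝ))) ^ 2 / (4 * (k : ℝ)))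
          - q ^ (-(lam + 2 * (w : ℝ) * ((ℓ : ℝ) + (m : ℝ) + 1)) ^ 2 / (4 * (k : ℝ)))))
      = ∑' n : ℕ, ((n : ℝ) + 1) *
          (q ^ (-(lam - 2 * (w : ℝ) * (n : ℝ)) ^ 2 / (4 * (k : ℝ)))
            - q ^ (-(lam + 2 * (w : ℝ) * ((n : ℝ) + 1)) ^ 2 / (4 * (k : ℝ)))) ∧
    (∑' n : ℕ, ((n : ℝ) + 1) *
          (q ^ (-(lam - 2 * (w : ℝ) * (n : ℝ)) ^ 2 / (4 * (k : ℝ)))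
            - q ^ (-(lam + 2 * (w : ℝ) * ((n : ℝ) + 1)) ^ 2 / (4 * (k : ℝ)))))
      = Th' w k q lam + (lam / (2 * (w : ℝ))) * Th w k q lam
          + ∑' n : ℕ, q ^ (-(lam - 2 * (w : ℝ) * (n : ℝ)) ^ 2 / (4 * (k : ℝ))) := by
  set g : ℤ → ℝ := fun ℓ => q ^ (-(lam - 2 * (w : ℝ) * (ℓ : ℝ)) ^ 2 / (4 * (k : ℝ)))
  have hk' : 4 * (k : ℝ) < 0 := by exact_mod_cast (by linarith : 4 * k < 0)
  have hw' : 2 * (w : ℝ) ≠ 0 := by positivity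
  have hg_summable : Summable g := by
    simpa using summable_abs_pow_mul_rpow_neg_sq_div hq0 hq1 hk' lam hw' 0
  have hℓg_summable : Summable fun ℓ : ℤ => (ℓ : ℝ) * g ℓ := by
    refine Summable.of_norm
      ((summable_abs_pow_mul_rpow_neg_sq_div hq0 hq1 hk' lam hw' 1).congr fun ℓ => ?_)
    simp [g, abs_of_nonneg (Real.rpow_nonneg hq0.le _)]
  have hg_nat (n : ℕ) : g n = q ^ (-(lam - 2 * (w : ℝ) * (n : ℝ)) ^ 2 / (4 * (k : ℝ))) := by
    simp [g]
  have hg_neg (n : ℕ) :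
      g (-(n + 1)) = q ^ (-(lam + 2 * (w : ℝ) * ((n : ℝ) + 1)) ^ 2 / (4 * (k : ℝ))) := by
    simp only [g]
    congr 1
    push_cast
    ring
  have hdiag := hasSum_succ_mul_sub_neg_succ hg_summable hℓg_summable
  have hprod := hasSum_prod_comp_add (c := fun n : ℕ => g n - g (-(n + 1)))
    (hdiag.summable.abs.congr fun n => by
      rw [abs_mul, Real.norm_eq_abs, abs_of_nonneg (by positivity : (0 : ℝ) ≤ n + 1)])
  simp only [hg_nat, hg_neg] at hdiag hprod
  simp only [Nat.cast_add] at hprod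
  refine ⟨hprod.summable, ?_, ?_⟩
  · rw [← hprod.summable.tsum_prod, hprod.tsum_eq]
    simp [nsmul_eq_mul]
  · rw [hdiag.tsum_eq, Th', sub_add_cancel]
end

section
/- Let w > 0 be an integer, k < 0 rational, λ real, 0 < q < 1, and define A_λ(q) = ∑_{ℓ∈ℤ} ∑_{m=0}^{∞} [q^{-(λ - 2w(ℓ+m))²/(4k)} - q^{-(λ + 2w(ℓ+m+1))²/(4k)}], where the inner sum converges absolutely for each ℓ and the outer series converges. Then A_λ(q) = 2Θ'_{λ}(q) + (1 + λ/w)·Θ_{λ}(q), where Θ_{λ}(q) = ∑_{ℓ∈ℤ} q^{-(λ-2wℓ)²/(4k)} and Θ'_{λ}(q) = -(λ/2w)Θ_{λ}(q) + ∑_{ℓ∈ℤ} ℓ·q^{-(λ-2wℓ)²/(4k)}. -/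
/-!
Write `F n = q ^ (-(λ - 2wn)² / 4k)`. The `ℓ`-th inner sum is the difference of the tails
`∑_{n ≥ ℓ} F n` and `∑_{n ≤ -ℓ-1} F n`. Exchanging the order of summation, `F n` is counted once
for each `ℓ ∈ [-n, n]` when `n ≥ 0`, and negatively once for each `ℓ ∈ [n+1, -n-1]` when `n < 0`;
in both cases with total weight `2n + 1`. So the double sum is `∑ (2n + 1) F n = 2Θ' + (1 + λ/w) Θ`.
The Gaussian decay of `F` makes every rearrangement absolutely convergent.
-/

open Finset Real

lemma summable_pow_mul_rpow_neg_sq_div {q : ℝ} (hq0 : 0 < q) (hq1 : q < 1) {a b : ℝ}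
    (ha : a ≠ 0) (hb : b < 0) (μ : ℝ) (j : ℕ) :
    Summable fun n : ℤ => (n : ℝ) ^ j * q ^ (-(μ - a * n) ^ 2 / b) := by
  set A := Real.log q / b
  have hA : 0 < A := div_pos_of_neg_of_neg (Real.log_neg hq0 hq1) hb
  refine Summable.of_norm_bounded (summable_pow_mul_jacobiTheta₂_term_bound
    (A * |a| * |μ| / π) (T := A * a ^ 2 / π) (by positivity) j) fun n => ?_
  rw [norm_mul, norm_pow, Real.norm_eq_abs, Real.norm_of_nonneg (by positivity), Int.cast_abs]
  gcongr
  have hquad : a ^ 2 * n ^ 2 - 2 * (|a| * |μ| * |(n : ℝ)|) ≤ (μ - a * n) ^ 2 := by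
    have := le_abs_self (a * μ * n)
    rw [abs_mul, abs_mul] at this
    nlinarith [sq_nonneg μ]
  rw [Real.rpow_def_of_pos hq0, Real.exp_le_exp]
  calc Real.log q * (-(μ - a * n) ^ 2 / b) = -A * (μ - a * n) ^ 2 := by ring
    _ ≤ -A * (a ^ 2 * n ^ 2 - 2 * (|a| * |μ| * |(n : ℝ)|)) := by nlinarith
    _ = _ := by field_simp

lemma hasSum_comp_tsum_indicator {α β γ : Type*} [NormedAddCommGroup α] [CompleteSpace α]
    {F : β → α} (hF : Summable F) {g : γ → β}
    (hg : g.Injective) {s : Set β} (hs : Set.range g = s) :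
    HasSum (F ∘ g) (∑' n, s.indicator F n) := by
  rw [← hs]
  exact (hg.hasSum_range_iff.mp (hasSum_subtype_iff_indicator.mpr (hF.indicator _).hasSum))

def tailWeight (ℓ n : ℤ) : ℝ := (if ℓ ≤ n then 1 else 0) - (if ℓ ≤ -n - 1 then 1 else 0)

lemma tailWeight_of_nonneg {n : ℤ} (hn : 0 ≤ n) (ℓ : ℤ) :
    tailWeight ℓ n = if ℓ ∈ Icc (-n) n then 1 else 0 := by
  simp only [tailWeight, mem_Icc]
  split_ifs <;> (try norm_num) <;> omega

lemma tailWeight_neg_sub_one (ℓ n : ℤ) : tailWeight ℓ (-n - 1) = -tailWeight ℓ n := by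
  rw [tailWeight, tailWeight, show -(-n - 1) - 1 = n by ring]
  ring

lemma hasSum_tailWeight_of_nonneg {n : ℤ} (hn : 0 ≤ n) :
    HasSum (fun ℓ => tailWeight ℓ n) (2 * n + 1) := by
  simp_rw [tailWeight_of_nonneg hn]
  have hcard : ((n + 1 - -n).toNat : ℤ) = 2 * n + 1 := by omega
  have h : HasSum (fun ℓ => if ℓ ∈ Icc (-n) n then (1 : ℝ) else 0)
      (∑ ℓ ∈ Icc (-n) n, if ℓ ∈ Icc (-n) n then (1 : ℝ) else 0) :=
    hasSum_sum_of_ne_finset_zero fun ℓ hℓ => if_neg hℓ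
  rwa [sum_ite_mem, inter_self, sum_const, Int.card_Icc, nsmul_one,
    show ((n + 1 - -n).toNat : ℝ) = 2 * n + 1 by exact_mod_cast hcard] at h

lemma hasSum_tailWeight (n : ℤ) : HasSum (fun ℓ => tailWeight ℓ n) (2 * n + 1) := by
  rcases le_or_gt 0 n with hn | hn
  · exact hasSum_tailWeight_of_nonneg hn
  · have := (hasSum_tailWeight_of_nonneg (n := -n - 1) (by omega)).neg
    simp_rw [tailWeight_neg_sub_one, neg_neg] at this
    rwa [show (2 * n + 1 : ℝ) = -(2 * ((-n - 1 : ℤ) : ℝ) + 1) by push_cast; ring]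

lemma hasSum_abs_tailWeight (n : ℤ) : HasSum (fun ℓ => |tailWeight ℓ n|) |2 * n + 1| := by
  wlog hn : 0 ≤ n generalizing n
  · have h := this (-n - 1) (by omega)
    simp_rw [tailWeight_neg_sub_one, abs_neg] at h
    rwa [show (2 * n + 1 : ℝ) = -(2 * ((-n - 1 : ℤ) : ℝ) + 1) by push_cast; ring, abs_neg]
  rw [abs_of_nonneg (by positivity)]
  simpa [tailWeight_of_nonneg hn, apply_ite] using hasSum_tailWeight_of_nonneg hn

section TailSums

variable {F : ℤ → ℝ}

lemma hasSum_sub_tail (hF : Summable F) (ℓ : ℤ) :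
    HasSum (fun m : ℕ => F (ℓ + m) - F (-(ℓ + m + 1))) (∑' n, tailWeight ℓ n * F n) := by
  have hup := hasSum_comp_tsum_indicator hF (g := fun m : ℕ => ℓ + m)
    (fun _ _ h => by simpa using h) (s := Set.Ici ℓ) <| by
      ext n; simp only [Set.mem_range, Set.mem_Ici]
      exact ⟨by rintro ⟨m, rfl⟩; omega, fun h => ⟨(n - ℓ).toNat, by omega⟩⟩
  have hdown := hasSum_comp_tsum_indicator hF (g := fun m : ℕ => -(ℓ + m + 1))
    (fun _ _ h => by simpa using h) (s := Set.Iic (-ℓ - 1)) <| by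
      ext n; simp only [Set.mem_range, Set.mem_Iic]
      exact ⟨by rintro ⟨m, rfl⟩; omega, fun h => ⟨(-ℓ - 1 - n).toNat, by omega⟩⟩
  have hsplit : ∑' n, tailWeight ℓ n * F n
      = ∑' n, (Set.Ici ℓ).indicator F n - ∑' n, (Set.Iic (-ℓ - 1)).indicator F n := by
    rw [← (hF.indicator _).tsum_sub (hF.indicator _)]
    congr 1 with n
    simp only [tailWeight, Set.indicator, Set.mem_Ici, Set.mem_Iic]
    split_ifs <;> first | (exfalso; omega) | ring
  rw [hsplit]
  exact hup.sub hdown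

lemma summable_uncurry_tailWeight_mul (hF : Summable F)
    (hnF : Summable fun n : ℤ => (n : ℝ) * F n) :
    Summable (Function.uncurry fun ℓ n => tailWeight ℓ n * F n) := by
  have habs : Summable fun p : ℤ × ℤ => |tailWeight p.2 p.1 * F p.1| := by
    refine (summable_prod_of_nonneg fun _ => abs_nonneg _).mpr ⟨fun n => ?_, ?_⟩
    · simp_rw [abs_mul]
      exact (hasSum_abs_tailWeight n).summable.mul_right _
    · simp_rw [abs_mul, tsum_mul_right, (hasSum_abs_tailWeight _).tsum_eq, ← abs_mul]
      exact (((hnF.mul_left 2).add hF).congr fun n => by ring).abs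
  exact habs.prod_symm.of_abs

theorem hasSum_tsum_sub_tail (hF : Summable F) (hnF : Summable fun n : ℤ => (n : ℝ) * F n) :
    HasSum (fun ℓ : ℤ => ∑' m : ℕ, (F (ℓ + m) - F (-(ℓ + m + 1))))
      (∑' n : ℤ, (2 * n + 1) * F n) := by
  have hK := summable_uncurry_tailWeight_mul hF hnF
  have hcol (n : ℤ) := (hasSum_tailWeight n).mul_right (F n)
  simp_rw [(hasSum_sub_tail hF _).tsum_eq, ← (hcol _).tsum_eq]
  rw [hK.tsum_comm' hK.prod_factor fun n => (hcol n).summable,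
    ← hK.tsum_prod_uncurry hK.prod_factor]
  exact hK.hasSum.prod_fiberwise fun ℓ => (hK.prod_factor ℓ).hasSum

end TailSums

theorem stmt12 (w : ℤ) (hw : 0 < w) (k : ℚ) (hk : k < 0)
    (lam q : ℝ) (hq0 : 0 < q) (hq1 : q < 1) :
    (∀ ℓ : ℤ, Summable (fun m : ℕ =>
        q ^ (-(lam - 2 * (w : ℝ) * ((ℓ : ℝ) + (m : ℝ))) ^ 2 / (4 * (k : ℝ)))
          - q ^ (-(lam + 2 * (w : ℝ) * ((ℓ : ℝ) + (m : ℝ) + 1)) ^ 2 / (4 * (k : ℝ))))) ∧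
    Summable (fun ℓ : ℤ => ∑' m : ℕ,
        (q ^ (-(lam - 2 * (w : ℝ) * ((ℓ : ℝ) + (m : ℝ))) ^ 2 / (4 * (k : ℝ)))
          - q ^ (-(lam + 2 * (w : ℝ) * ((ℓ : ℝ) + (m : ℝ) + 1)) ^ 2 / (4 * (k : ℝ))))) ∧
    (∑' ℓ : ℤ, ∑' m : ℕ,
        (q ^ (-(lam - 2 * (w : ℝ) * ((ℓ : ℝ) + (m : ℝ))) ^ 2 / (4 * (k : ℝ)))
          - q ^ (-(lam + 2 * (w : ℝ) * ((ℓ : ℝ) + (m : ℝ) + 1)) ^ 2 / (4 * (k : ℝ)))))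
      = 2 * Th' w k q lam + (1 + lam / (w : ℝ)) * Th w k q lam := by
  have hk' : 4 * (k : ℝ) < 0 := by exact_mod_cast (by linarith : 4 * k < 0)
  have h2w : 2 * (w : ℝ) ≠ 0 := by positivity
  set F : ℤ → ℝ := fun n => q ^ (-(lam - 2 * (w : ℝ) * n) ^ 2 / (4 * (k : ℝ))) with hF_def
  have hF : Summable F := by
    simpa using summable_pow_mul_rpow_neg_sq_div hq0 hq1 h2w hk' lam 0
  have hnF : Summable fun n : ℤ => (n : ℝ) * F n := by
    simpa using summable_pow_mul_rpow_neg_sq_div hq0 hq1 h2w hk' lam 1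
  have hterm (ℓ : ℤ) (m : ℕ) :
      q ^ (-(lam - 2 * (w : ℝ) * ((ℓ : ℝ) + (m : ℝ))) ^ 2 / (4 * (k : ℝ)))
        - q ^ (-(lam + 2 * (w : ℝ) * ((ℓ : ℝ) + (m : ℝ) + 1)) ^ 2 / (4 * (k : ℝ)))
      = F (ℓ + m) - F (-(ℓ + m + 1)) := by
    simp only [hF_def]
    push_cast
    ring_nf
  have hsum := hasSum_tsum_sub_tail hF hnF
  simp only [hterm]
  refine ⟨fun ℓ => (hasSum_sub_tail hF ℓ).summable, hsum.summable, ?_⟩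
  have hTh : Th w k q lam = ∑' n, F n := rfl
  have hTh' : Th' w k q lam = ∑' n, n * F n - lam / (2 * w) * ∑' n, F n := rfl
  have hsplit : ∑' n : ℤ, (2 * n + 1) * F n = 2 * ∑' n : ℤ, n * F n + ∑' n, F n := by
    rw [← tsum_mul_left, ← (hnF.mul_left 2).tsum_add hF]
    congr 1 with n
    ring
  rw [hsum.tsum_eq, hsplit, hTh, hTh']
  field_simp
  ring
end
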